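/- Let X_1, …, X_n (n ≥ 2) be jointly distributed random variables on finite alphabets. For every family 𝓕 of subsets of [n] with a fractional partition γ satisfying the standing assumptions, the (𝓕, γ)-mutual information satisfies (𝓕, γ)-MI(X_1; …; X_n) = ∑_{F ∈ 𝓕} γ(F) H(X_F) − H(X_{[n]}) ≤ TC(X_1; …; X_n) = ∑_{i=1}^n H(X_i) − H(X_{[n]}); moreover, equality holds for the family 𝓕 = {{1}, …, {n}} of singletons with γ ≡ 1. Hence the maximum of (𝓕, γ)-MI(X_1; …; X_n) over all such (𝓕, γ) equals TC(X_1; …; X_n). -/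

import Mathlib

open Finset
open scoped Classical BigOperators

/-- Entropy of the marginal of `p` on the coordinates in `F`
    (`H(X_F) = ∑ negMulLog (p_F)`, with `0 log 0 = 0`). -/
noncomputable def Hent {n : ℕ} {𝒳 : Fin n → Type} [∀ i, Fintype (𝒳 i)]
    (p : (∀ i, 𝒳 i) → ℝ) (F : Finset (Fin n)) : ℝ :=
  ∑ y : (i : {i // i ∈ F}) → 𝒳 i.1,
    Real.negMulLog
      (∑ x ∈ Finset.univ.filter (fun x : ∀ i, 𝒳 i => ∀ i : {i // i ∈ F}, x i.1 = y i), p x)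

/-- Gibbs' inequality. -/
lemma gibbs_aux {α : Type*} [Fintype α] (f g : α → ℝ) (hf0 : ∀ a, 0 ≤ f a)
    (hg0 : ∀ a, 0 ≤ g a) (himp : ∀ a, 0 < f a → 0 < g a)
    (hf1 : ∑ a, f a = 1) (hg1 : ∑ a, g a ≤ 1) :
    ∑ a, Real.negMulLog (f a) ≤ ∑ a, -(f a * Real.log (g a)) := by
  have key : ∀ a : α, Real.negMulLog (f a) - -(f a * Real.log (g a)) ≤ g a - f a := by
    intro a
    rcases eq_or_lt_of_le (hf0 a) with h | h
    · simp [← h, Real.negMulLog, hg0 a]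
    · have hg := himp a h
      have hlog : Real.log (g a / f a) ≤ g a / f a - 1 := Real.log_le_sub_one_of_pos (by positivity)
      rw [Real.log_div (ne_of_gt hg) (ne_of_gt h)] at hlog
      have h2 := mul_le_mul_of_nonneg_left hlog (le_of_lt h)
      have h3 : f a * (g a / f a - 1) = g a - f a := by field_simp
      rw [h3] at h2
      rw [Real.negMulLog]
      nlinarith [h2]
  have := Finset.sum_le_sum (fun a (_ : a ∈ univ) => key a)
  rw [Finset.sum_sub_distrib, Finset.sum_sub_distrib, hf1] at this
  linarith

section Aux
variable {n : ℕ} {𝒳 : Fin n → Type} [∀ i, Fintype (𝒳 i)]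

def restr (F : Finset (Fin n)) (x : ∀ i, 𝒳 i) : (i : {i // i ∈ F}) → 𝒳 i.1 := fun i => x i.1

noncomputable def marg (p : (∀ i, 𝒳 i) → ℝ) (F : Finset (Fin n))
    (y : (i : {i // i ∈ F}) → 𝒳 i.1) : ℝ :=
  ∑ x ∈ Finset.univ.filter (fun x : ∀ i, 𝒳 i => restr F x = y), p x

noncomputable def marg1 (p : (∀ i, 𝒳 i) → ℝ) (i : Fin n) (a : 𝒳 i) : ℝ :=
  ∑ x ∈ Finset.univ.filter (fun x : ∀ i, 𝒳 i => x i = a), p x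

lemma Hent_eq (p : (∀ i, 𝒳 i) → ℝ) (F : Finset (Fin n)) :
    Hent p F = ∑ y, Real.negMulLog (marg p F y) := by
  unfold Hent marg
  refine Finset.sum_congr rfl fun y _ => ?_
  congr 1
  refine Finset.sum_congr (Finset.filter_congr fun x _ => ?_) fun _ _ => rfl
  simp [restr, funext_iff]

variable {p : (∀ i, 𝒳 i) → ℝ}

lemma marg_nonneg (hp0 : ∀ x, 0 ≤ p x) (F : Finset (Fin n)) (y) : 0 ≤ marg p F y :=
  Finset.sum_nonneg fun x _ => hp0 x

lemma marg1_nonneg (hp0 : ∀ x, 0 ≤ p x) (i : Fin n) (a : 𝒳 i) : 0 ≤ marg1 p i a :=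
  Finset.sum_nonneg fun x _ => hp0 x

lemma sum_marg (hp1 : ∑ x : ∀ i, 𝒳 i, p x = 1) (F : Finset (Fin n)) :
    ∑ y, marg p F y = 1 := by
  rw [← hp1]
  exact Finset.sum_fiberwise univ (restr F) p

set_option maxHeartbeats 1000000 in
lemma sum_marg1 (hp1 : ∑ x : ∀ i, 𝒳 i, p x = 1) (i : Fin n) :
    ∑ a, marg1 p i a = 1 := by
  rw [← hp1]
  exact Finset.sum_fiberwise univ (fun x => x i) p

lemma marg_le_marg1 (hp0 : ∀ x, 0 ≤ p x) {F : Finset (Fin n)} (j : {j // j ∈ F})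
    (y : (i : {i // i ∈ F}) → 𝒳 i.1) : marg p F y ≤ marg1 p j.1 (y j) := by
  refine Finset.sum_le_sum_of_subset_of_nonneg ?_ fun x _ _ => hp0 x
  intro x hx
  simp only [mem_filter, mem_univ, true_and] at hx ⊢
  rw [← hx]; rfl

lemma fiber_sum_marg (p : (∀ i, 𝒳 i) → ℝ) {F : Finset (Fin n)} (j : {j // j ∈ F}) (a : 𝒳 j.1) :
    ∑ y ∈ Finset.univ.filter (fun y : (i : {i // i ∈ F}) → 𝒳 i.1 => y j = a), marg p F y
      = marg1 p j.1 a := by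
  unfold marg marg1
  rw [Finset.sum_fiberwise_eq_sum_filter univ _ (restr F) p]
  congr 1
  ext x
  simp [restr]

def ePi (i : Fin n) : ((j : {j // j ∈ ({i} : Finset (Fin n))}) → 𝒳 j.1) ≃ 𝒳 i where
  toFun y := y ⟨i, Finset.mem_singleton_self i⟩
  invFun a j := cast (congrArg 𝒳 (Finset.mem_singleton.mp j.2)).symm a
  left_inv y := by
    funext j
    obtain ⟨j, hj⟩ := j
    have h : j = i := Finset.mem_singleton.mp hj
    subst h
    rfl
  right_inv a := rfl

lemma marg_single (p : (∀ i, 𝒳 i) → ℝ) (i : Fin n)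
    (y : (j : {j // j ∈ ({i} : Finset (Fin n))}) → 𝒳 j.1) :
    marg p {i} y = marg1 p i (ePi i y) := by
  unfold marg marg1
  refine Finset.sum_congr (Finset.filter_congr fun x _ => ?_) fun _ _ => rfl
  simp only [restr, funext_iff]
  constructor
  · intro h; exact h ⟨i, Finset.mem_singleton_self i⟩
  · intro h j
    obtain ⟨j, hj⟩ := j
    have hji : j = i := Finset.mem_singleton.mp hj
    subst hji
    exact h

lemma Hent_singleton (p : (∀ i, 𝒳 i) → ℝ) (i : Fin n) :
    Hent p {i} = ∑ a : 𝒳 i, Real.negMulLog (marg1 p i a) := by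
  rw [Hent_eq]
  exact Fintype.sum_equiv (ePi i) _ _ fun y => by rw [marg_single]

/-- Subadditivity of entropy. -/
lemma Hent_subadd (hp0 : ∀ x, 0 ≤ p x) (hp1 : ∑ x : ∀ i, 𝒳 i, p x = 1) (F : Finset (Fin n)) :
    Hent p F ≤ ∑ i ∈ F, Hent p {i} := by
  set q : ((i : {i // i ∈ F}) → 𝒳 i.1) → ℝ :=
    fun y => ∏ j : {j // j ∈ F}, marg1 p j.1 (y j) with hq
  have hq0 : ∀ y, 0 ≤ q y := fun y => Finset.prod_nonneg fun j _ => marg1_nonneg hp0 _ _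
  have himp : ∀ y, 0 < marg p F y → 0 < q y := fun y hy =>
    Finset.prod_pos fun j _ => lt_of_lt_of_le hy (marg_le_marg1 hp0 j y)
  have hqsum : ∑ y, q y = 1 := by
    have h1 := (Fintype.prod_sum (fun (j : {j // j ∈ F}) (a : 𝒳 j.1) => marg1 p j.1 a)).symm
    calc ∑ y, q y = ∏ j : {j // j ∈ F}, ∑ a, marg1 p j.1 a := h1
      _ = 1 := by simp [sum_marg1 hp1]
  have main := gibbs_aux (marg p F) q (marg_nonneg hp0 F) hq0 himp (sum_marg hp1 F) hqsum.le
  rw [Hent_eq]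
  refine main.trans_eq ?_
  have step1 : ∀ y, -(marg p F y * Real.log (q y)) =
      ∑ j : {j // j ∈ F}, -(marg p F y * Real.log (marg1 p j.1 (y j))) := by
    intro y
    rcases eq_or_lt_of_le (marg_nonneg hp0 F y) with h | h
    · simp [← h]
    · show -(marg p F y * Real.log (∏ j : {j // j ∈ F}, marg1 p j.1 (y j))) = _
      rw [Real.log_prod (fun j _ => (lt_of_lt_of_le h (marg_le_marg1 hp0 j y)).ne'),
        Finset.mul_sum, ← Finset.sum_neg_distrib]
  calc ∑ y, -(marg p F y * Real.log (q y))
      = ∑ y, ∑ j : {j // j ∈ F}, -(marg p F y * Real.log (marg1 p j.1 (y j))) :=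
        Finset.sum_congr rfl fun y _ => step1 y
    _ = ∑ j : {j // j ∈ F}, ∑ y, -(marg p F y * Real.log (marg1 p j.1 (y j))) :=
        Finset.sum_comm
    _ = ∑ j : {j // j ∈ F}, Hent p {j.1} := by
        refine Finset.sum_congr rfl fun j _ => ?_
        rw [Hent_singleton,
          ← Finset.sum_fiberwise univ (fun y => y j)
            (fun y => -(marg p F y * Real.log (marg1 p j.1 (y j))))]
        refine Finset.sum_congr rfl fun a _ => ?_
        have h1 : ∑ y ∈ univ.filter (fun y => y j = a),
              -(marg p F y * Real.log (marg1 p j.1 (y j)))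
            = ∑ y ∈ univ.filter (fun y => y j = a),
              -(marg p F y * Real.log (marg1 p j.1 a)) :=
          Finset.sum_congr rfl fun y hy => by rw [(Finset.mem_filter.mp hy).2]
        rw [h1, Finset.sum_neg_distrib, ← Finset.sum_mul, fiber_sum_marg p j a]
        simp [Real.negMulLog]
    _ = ∑ i ∈ F, Hent p {i} := by
        rw [Finset.univ_eq_attach, Finset.sum_attach F (fun i => Hent p {i})]

end Aux

theorem stmt_15 (n : ℕ) (hn : 2 ≤ n)
    (𝒳 : Fin n → Type) [∀ i, Fintype (𝒳 i)] [∀ i, Nonempty (𝒳 i)]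
    (p : (∀ i, 𝒳 i) → ℝ)
    (hp0 : ∀ x, 0 ≤ p x) (hp1 : ∑ x : ∀ i, 𝒳 i, p x = 1) :
    (∀ (ι : Type) [Fintype ι] (S : ι → Finset (Fin n)) (γ : ι → ℝ),
      (∀ k, S k ≠ Finset.univ) →
      (∀ k, 0 < γ k) →
      (∀ i j : Fin n, i ≠ j → ¬ (∀ k, i ∈ S k ↔ j ∈ S k)) →
      (∀ i : Fin n, ∑ k ∈ Finset.univ.filter (fun k => i ∈ S k), γ k = 1) →
      (∑ k : ι, γ k * Hent p (S k)) - Hent p Finset.univ ≤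
        (∑ i : Fin n, Hent p {i}) - Hent p Finset.univ) ∧
    (∑ i : Fin n, (1 : ℝ) * Hent p {i}) - Hent p Finset.univ =
      (∑ i : Fin n, Hent p {i}) - Hent p Finset.univ := by
  constructor
  · intro ι _ S γ hS hγ hsep hfrac
    have key : ∑ k : ι, γ k * Hent p (S k) ≤ ∑ i : Fin n, Hent p {i} := by
      calc ∑ k : ι, γ k * Hent p (S k)
          ≤ ∑ k : ι, γ k * ∑ i ∈ S k, Hent p {i} :=
            Finset.sum_le_sum fun k _ =>
              mul_le_mul_of_nonneg_left (Hent_subadd hp0 hp1 (S k)) (hγ k).le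
        _ = ∑ k : ι, ∑ i : Fin n, (if i ∈ S k then γ k * Hent p {i} else 0) := by
            refine Finset.sum_congr rfl fun k _ => ?_
            rw [Finset.mul_sum, Finset.sum_ite_mem, Finset.univ_inter]
        _ = ∑ i : Fin n, ∑ k : ι, (if i ∈ S k then γ k * Hent p {i} else 0) :=
            Finset.sum_comm
        _ = ∑ i : Fin n, (∑ k ∈ Finset.univ.filter (fun k => i ∈ S k), γ k) * Hent p {i} := by
            refine Finset.sum_congr rfl fun i _ => ?_
            rw [Finset.sum_mul]
            exact (Finset.sum_filter _ _).symm
        _ = ∑ i : Fin n, Hent p {i} := by simp [hfrac]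
    linarith
  · simp
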